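/- arXiv:2412.19335 — 4 statements merged into one kernel-verified Lean document; each statement's English description precedes it below -/
import Mathlib

section
/- Let X be a connected and locally connected topological space, A a connected subset of X, and B a clopen subset of the subspace X \ A. Then A ∪ B is connected. -/
private lemma stmt_0_aux {X : Type*} [TopologicalSpace X] [ConnectedSpace X]
    (A B U V U₀ F : Set X) (hU₀ : IsOpen U₀) (hF : IsClosed F)
    (hBU₀ : B = U₀ ∩ Aᶜ) (hBF : B = F ∩ Aᶜ)
    (hU : IsOpen U) (hV : IsOpen V) (hcov : A ∪ B ⊆ U ∪ V) (hAU : A ⊆ U)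
    (hAne : A.Nonempty)
    (hempty : A ∪ B ⊆ (U ∩ V)ᶜ) (hVne : ((A ∪ B) ∩ V).Nonempty) : False := by
  -- Main argument: P' := U ∪ Fᶜ, Q' := V ∩ U₀ is an open cover of X with empty intersection,
  -- both nonempty, contradicting connectedness of X.
  set P' := U ∪ Fᶜ with hP'def
  set Q' := V ∩ U₀ with hQ'def
  have hP'open : IsOpen P' := hU.union hF.isOpen_compl
  have hQ'open : IsOpen Q' := hV.inter hU₀
  have hcovX : (Set.univ : Set X) ⊆ P' ∪ Q' := by
    intro x _
    by_cases hxA : x ∈ A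
    · exact Or.inl (Or.inl (hAU hxA))
    · by_cases hxB : x ∈ B
      · rcases hcov (Or.inr hxB) with h | h
        · exact Or.inl (Or.inl h)
        · exact Or.inr ⟨h, (hBU₀ ▸ hxB).1⟩
      · refine Or.inl (Or.inr ?_)
        intro hxF
        exact hxB (hBF ▸ ⟨hxF, hxA⟩)
  have hdisj : P' ∩ Q' = ∅ := by
    ext x
    simp only [Set.mem_inter_iff, Set.mem_empty_iff_false, iff_false]
    rintro ⟨hP, hxV, hxU₀⟩
    have hxAB : x ∈ A ∪ B := by
      by_cases hxA : x ∈ A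
      · exact Or.inl hxA
      · exact Or.inr (hBU₀ ▸ ⟨hxU₀, hxA⟩)
    rcases hP with hxU | hxF
    · exact hempty hxAB ⟨hxU, hxV⟩
    · rcases hxAB with hxA | hxB
      · exact hempty (Or.inl hxA) ⟨hAU hxA, hxV⟩
      · exact hxF (hBF ▸ hxB).1
  have hQ'ne : ((Set.univ : Set X) ∩ Q').Nonempty := by
    obtain ⟨q, hqAB, hqV⟩ := hVne
    have hqB : q ∈ B := by
      rcases hqAB with hqA | hqB
      · exact absurd ⟨hAU hqA, hqV⟩ (fun h => hempty (Or.inl hqA) h)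
      · exact hqB
    exact ⟨q, Set.mem_univ q, hqV, (hBU₀ ▸ hqB).1⟩
  have hP'ne : ((Set.univ : Set X) ∩ P').Nonempty := by
    obtain ⟨a, ha⟩ := hAne
    exact ⟨a, Set.mem_univ a, Or.inl (hAU ha)⟩
  obtain ⟨z, _, hz⟩ := isPreconnected_univ (u := P') (v := Q') hP'open hQ'open hcovX hP'ne hQ'ne
  exact absurd hz (by rw [Set.eq_empty_iff_forall_notMem] at hdisj; exact hdisj z)

/-- Let `X` be a connected and locally connected topological space, `A` a connected
subset of `X`, and `B` a clopen subset of the subspace `X \ A`.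
Then `A ∪ B` is connected. -/
theorem stmt_0 {X : Type*} [TopologicalSpace X] [ConnectedSpace X]
    [LocallyConnectedSpace X] (A B : Set X) (hA : IsConnected A)
    (hBsub : B ⊆ Aᶜ)
    (hB : IsClopen {x : (Aᶜ : Set X) | (x : X) ∈ B}) :
    IsConnected (A ∪ B) := by
  -- extract open and closed descriptions of B
  have hset : {x : (Aᶜ : Set X) | (x : X) ∈ B} = (Subtype.val : (Aᶜ : Set X) → X) ⁻¹' B := rfl
  obtain ⟨U₀, hU₀open, hU₀eq⟩ := isOpen_induced_iff.mp hB.2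
  obtain ⟨F, hFclosed, hFeq⟩ := isClosed_induced_iff.mp hB.1
  rw [hset] at hU₀eq hFeq
  have hBU₀ : B = U₀ ∩ Aᶜ := by
    ext x
    constructor
    · intro hx
      have hxA : x ∈ Aᶜ := hBsub hx
      have : (⟨x, hxA⟩ : (Aᶜ : Set X)) ∈ (Subtype.val : (Aᶜ : Set X) → X) ⁻¹' U₀ := by
        rw [hU₀eq]; exact hx
      exact ⟨this, hxA⟩
    · rintro ⟨hxU₀, hxA⟩
      have : (⟨x, hxA⟩ : (Aᶜ : Set X)) ∈ (Subtype.val : (Aᶜ : Set X) → X) ⁻¹' U₀ := hxU₀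
      rw [hU₀eq] at this; exact this
  have hBF : B = F ∩ Aᶜ := by
    ext x
    constructor
    · intro hx
      have hxA : x ∈ Aᶜ := hBsub hx
      have : (⟨x, hxA⟩ : (Aᶜ : Set X)) ∈ (Subtype.val : (Aᶜ : Set X) → X) ⁻¹' F := by
        rw [hFeq]; exact hx
      exact ⟨this, hxA⟩
    · rintro ⟨hxF, hxA⟩
      have : (⟨x, hxA⟩ : (Aᶜ : Set X)) ∈ (Subtype.val : (Aᶜ : Set X) → X) ⁻¹' F := hxF
      rw [hFeq] at this; exact this
  constructor
  · exact ⟨hA.nonempty.choose, Or.inl hA.nonempty.choose_spec⟩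
  · intro U V hU hV hcov hUne hVne
    by_contra h
    rw [Set.not_nonempty_iff_eq_empty] at h
    have hempty : A ∪ B ⊆ (U ∩ V)ᶜ := by
      intro x hx hxUV
      rw [Set.eq_empty_iff_forall_notMem] at h
      exact h x ⟨hx, hxUV⟩
    have hAUV : A ⊆ U ∨ A ⊆ V := by
      rcases (A ∩ U).eq_empty_or_nonempty with hAU | hAU
      · refine Or.inr fun x hx => ?_
        rcases hcov (Or.inl hx) with h' | h'
        · exact absurd (⟨hx, h'⟩ : x ∈ A ∩ U) (by rw [Set.eq_empty_iff_forall_notMem] at hAU; exact hAU x)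
        · exact h'
      rcases (A ∩ V).eq_empty_or_nonempty with hAV | hAV
      · refine Or.inl fun x hx => ?_
        rcases hcov (Or.inl hx) with h' | h'
        · exact h'
        · exact absurd (⟨hx, h'⟩ : x ∈ A ∩ V) (by rw [Set.eq_empty_iff_forall_notMem] at hAV; exact hAV x)
      obtain ⟨z, hzA, hzUV⟩ := hA.isPreconnected U V hU hV (fun x hx => hcov (Or.inl hx)) hAU hAV
      exact absurd hzUV (hempty (Or.inl hzA))
    rcases hAUV with hAU | hAV
    · exact stmt_0_aux A B U V U₀ F hU₀open hFclosed hBU₀ hBF hU hV hcov hAU hA.nonempty hempty hVne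
    · exact stmt_0_aux A B V U U₀ F hU₀open hFclosed hBU₀ hBF hV hU
        (by rw [Set.union_comm V U]; exact hcov) hAV hA.nonempty
        (by rw [Set.inter_comm V U]; exact hempty) hUne
end

section
/- Let K be an algebraically closed field of characteristic 0 and let f be a polynomial of degree d ≥ 2 over K whose fixed-point multipliers λ₁, …, λ_d (with multiplicity) all differ from 1. Then the holomorphic fixed-point formula holds: the sum over j of 1/(1 − λ_j) equals 0. -/
/-!
Put `g = f - X`, whose roots are the fixed points and for which `1 - f'(z) = -g'(z)`.
The multiplier hypothesis makes the `d` roots of `g` simple, so `g = c ∏ (X - zⱼ)` and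
`1 / g'(zⱼ) = c⁻¹ ∏_{k ≠ j} (zⱼ - zₖ)⁻¹`. By Lagrange interpolation of the constant `1` at
the `d ≥ 2` nodes `zⱼ`, the sum of these nodal weights is the coefficient of `X ^ (d - 1)`
in `1`, which is `0`.
-/

open Polynomial Finset

namespace Lagrange

theorem sum_nodalWeight_eq_zero {F ι : Type*} [Field F] [DecidableEq ι] {s : Finset ι}
    {v : ι → F} (hvs : Set.InjOn v s) (hs : 2 ≤ #s) :
    ∑ i ∈ s, nodalWeight s v i = 0 := by
  have hcoeff := coeff_eq_sum hvs (P := 1) (by rw [degree_one]; exact_mod_cast (by omega : 0 < #s))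
  rw [coeff_one, if_neg (by omega)] at hcoeff
  simp only [eval_one, one_div] at hcoeff
  simp only [nodalWeight, prod_inv_distrib, hcoeff]

end Lagrange

namespace Polynomial

theorem nodup_roots_of_forall_eval_derivative_ne_zero {R : Type*} [CommRing R] [IsDomain R]
    [DecidableEq R] {p : R[X]} (h : ∀ z ∈ p.roots, (derivative p).eval z ≠ 0) :
    p.roots.Nodup := by
  rcases eq_or_ne p 0 with rfl | hp
  · simp
  refine Multiset.nodup_iff_count_le_one.mpr fun z => not_lt.mp fun hz => ?_
  rw [count_roots, one_lt_rootMultiplicity_iff_isRoot hp] at hz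
  exact h z ((mem_roots hp).mpr hz.1) hz.2

theorem sum_roots_inv_eval_derivative_eq_zero {F : Type*} [Field F] {p : F[X]} (hsplit : p.Splits)
    (hnodup : p.roots.Nodup) (hdeg : 2 ≤ p.natDegree) :
    (p.roots.map fun z => ((derivative p).eval z)⁻¹).sum = 0 := by
  classical
  set s : Finset F := ⟨p.roots, hnodup⟩
  have hp : p = C p.leadingCoeff * Lagrange.nodal s id := hsplit.eq_prod_roots
  have hweight : ∀ z ∈ s, ((derivative p).eval z)⁻¹
      = p.leadingCoeff⁻¹ * Lagrange.nodalWeight s id z := fun z hz => by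
    conv_lhs => rw [hp]
    rw [derivative_C_mul, eval_mul, eval_C, mul_inv,
      Lagrange.nodalWeight_eq_eval_derivative_nodal hz, id]
  have hcard : 2 ≤ #s := by rwa [card_mk, ← hsplit.natDegree_eq_card_roots]
  change ∑ z ∈ s, ((derivative p).eval z)⁻¹ = 0
  rw [sum_congr rfl hweight, ← mul_sum,
    Lagrange.sum_nodalWeight_eq_zero Function.injective_id.injOn hcard, mul_zero]

end Polynomial

theorem stmt_3_general {K : Type*} [Field K] [IsAlgClosed K]
    (f : K[X]) (d : ℕ) (hd : 2 ≤ d) (hdeg : f.natDegree = d)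
    (hmult : ∀ z ∈ (f - X).roots, (derivative f).eval z ≠ 1) :
    (((f - X).roots).map fun z => (1 - (derivative f).eval z)⁻¹).sum = 0 := by
  classical
  have hderiv : derivative (f - X) = derivative f - 1 := by
    rw [derivative_sub, derivative_X]
  have hnatDegree : (f - X).natDegree = d := by
    rw [natDegree_sub_eq_left_of_natDegree_lt (by rw [natDegree_X]; omega), hdeg]
  have hsimple : (f - X).roots.Nodup :=
    nodup_roots_of_forall_eval_derivative_ne_zero fun z hz => by
      rw [hderiv, eval_sub, eval_one, sub_ne_zero]
      exact hmult z hz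
  have hneg : ∀ z, (1 - (derivative f).eval z)⁻¹ = -((derivative (f - X)).eval z)⁻¹ :=
    fun z => by rw [hderiv, eval_sub, eval_one, ← inv_neg, neg_sub]
  simp only [hneg, Multiset.sum_map_neg, neg_eq_zero]
  exact sum_roots_inv_eval_derivative_eq_zero (IsAlgClosed.splits _) hsimple (by omega)

/-- The holomorphic fixed-point formula: if all fixed-point multipliers of a polynomial
of degree `d ≥ 2` over an algebraically closed field of characteristic zero differ
from `1`, then `∑ 1 / (1 - λⱼ) = 0`. -/
theorem stmt_3 {K : Type*} [Field K] [IsAlgClosed K] [CharZero K]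
    (f : K[X]) (d : ℕ) (hd : 2 ≤ d) (hdeg : f.natDegree = d)
    (hmult : ∀ z ∈ (f - X).roots, (derivative f).eval z ≠ 1) :
    (((f - X).roots).map fun z => (1 - (derivative f).eval z)⁻¹).sum = 0 :=
  stmt_3_general f d hd hdeg hmult
end

section
/- Let K be an algebraically closed field with a non-Archimedean absolute value, f : U → V a polynomial map of degree e ≥ 1 between disks, with e less than the residue characteristic of K if the latter is positive. Then e = C + 1, where C is the number of critical points of f in U counted with multiplicity. -/
open Polynomial
open scoped Classical

/-- `D` is a disk (open or closed) of radius `r` for the absolute value `v`. -/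
def IsDiskOfRadius {K : Type*} [Field K] (v : AbsoluteValue K ℝ) (D : Set K)
    (r : ℝ) : Prop :=
  0 < r ∧ ∃ a : K, D = {z : K | v (z - a) < r} ∨ D = {z : K | v (z - a) ≤ r}

/-- The number of preimages of `y` under `f` lying in `U`, counted with multiplicity. -/
noncomputable def mapDegreeOn {K : Type*} [Field K] (f : K[X]) (U : Set K) (y : K) : ℕ :=
  Multiset.card (Multiset.filter (· ∈ U) ((f - C y).roots))

/-!
Expand a polynomial `p` around a centre `a` and weigh its `i`-th coefficient by `r ^ i`; the
largest weight is the Gauss norm `‖p‖_r`. Since the Gauss norm is multiplicative, the least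
index at which it is attained is additive under products. For `X - z` that index is `1` if
`|z| < r` and `0` otherwise, so for a split polynomial it is the number of roots in the open disk
`|z - a| < r`. Passing to `p'` moves the `i`-th weighted coefficient to index `i - 1` and
multiplies it by `|i| ≤ 1`, with `|e| = 1` at the least index `e`; hence the least index for `p'`
is `e - 1`. A closed disk meets the finitely many roots involved in the same way as a slightly
larger open disk, and applying this to `f - y` for a point `y ∈ V` gives the theorem.
-/

namespace Polynomial

section Ring

variable {R : Type*} [Ring R] {v : AbsoluteValue R ℝ} {r : ℝ}

variable (v r) in
def dominantIndices (p : R[X]) : Set ℕ :=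
  {i | v (p.coeff i) * r ^ i = p.gaussNorm v r}

@[simp]
lemma mem_dominantIndices {p : R[X]} {i : ℕ} :
    i ∈ p.dominantIndices v r ↔ v (p.coeff i) * r ^ i = p.gaussNorm v r :=
  Iff.rfl

lemma gaussNorm_eq_of_forall_le (hr : 0 ≤ r) {p : R[X]} {N : ℕ}
    (h : ∀ i, v (p.coeff i) * r ^ i ≤ v (p.coeff N) * r ^ N) :
    p.gaussNorm v r = v (p.coeff N) * r ^ N := by
  obtain ⟨i, hi⟩ := p.exists_eq_gaussNorm v r
  exact le_antisymm (hi ▸ h i) (p.le_gaussNorm v hr N)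

lemma gaussNorm_pos (hr : 0 < r) {p : R[X]} (hp : p ≠ 0) : 0 < p.gaussNorm v r :=
  (p.gaussNorm_nonneg v hr.le).lt_of_ne'
    ((gaussNorm_eq_zero_iff v p (fun _ => v.eq_zero.mp) hr).not.mpr hp)

lemma coeff_mul_pow_lt_gaussNorm (hr : 0 ≤ r) {p : R[X]} {N i : ℕ}
    (hN : IsLeast (p.dominantIndices v r) N) (hi : i < N) :
    v (p.coeff i) * r ^ i < p.gaussNorm v r :=
  (p.le_gaussNorm v hr i).lt_of_ne fun h => (hN.2 h).not_gt hi

lemma isLeast_dominantIndices_C (c : R) : IsLeast ((C c).dominantIndices v r) 0 :=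
  ⟨by simp, fun i _ => i.zero_le⟩

lemma isLeast_dominantIndices_X_sub_C [Nontrivial R] (hr : 0 < r) (z : R) :
    IsLeast ((X - C z).dominantIndices v r) (if v z < r then 1 else 0) := by
  have hw : ∀ i, v ((X - C z).coeff i) * r ^ i
      = if i = 0 then v z else if i = 1 then r else 0 := by
    rintro (_ | _ | i) <;> simp [coeff_X, coeff_C]
  split_ifs with hz
  · have hnorm : (X - C z).gaussNorm v r = r := by
      rw [gaussNorm_eq_of_forall_le hr.le (N := 1), hw]
      · simp
      · intro i; rw [hw, hw]; split_ifs <;> simp_all <;> linarith [v.nonneg z]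
    refine ⟨by simp [hnorm], ?_⟩
    rintro (_ | i) h
    · simp [hnorm, hz.ne] at h
    · exact Nat.le_add_left 1 i
  · refine ⟨?_, fun i _ => i.zero_le⟩
    rw [mem_dominantIndices, gaussNorm_eq_of_forall_le hr.le (N := 0)]
    intro i; rw [hw, hw]; split_ifs <;> simp_all

open Finset.HasAntidiagonal in
lemma isLeast_dominantIndices_mul (hna : IsNonarchimedean v) (hr : 0 < r) {p q : R[X]}
    (hp : p ≠ 0) (hq : q ≠ 0) {N M : ℕ} (hpN : IsLeast (p.dominantIndices v r) N)
    (hqM : IsLeast (q.dominantIndices v r) M) :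
    IsLeast ((p * q).dominantIndices v r) (N + M) := by
  have hterm : ∀ i j, v (p.coeff i * q.coeff j) * r ^ (i + j)
      = (v (p.coeff i) * r ^ i) * (v (q.coeff j) * r ^ j) := by
    intro i j; rw [map_mul, pow_add]; ring
  have hlt : ∀ i j, i < N ∨ j < M →
      (v (p.coeff i) * r ^ i) * (v (q.coeff j) * r ^ j) < p.gaussNorm v r * q.gaussNorm v r := by
    rintro i j (hi | hj)
    · exact mul_lt_mul_of_lt_of_le_of_nonneg_of_pos (coeff_mul_pow_lt_gaussNorm hr.le hpN hi)
        (q.le_gaussNorm v hr.le j) (by positivity) (gaussNorm_pos hr hq)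
    · exact mul_lt_mul_of_le_of_lt_of_nonneg_of_pos (p.le_gaussNorm v hr.le i)
        (coeff_mul_pow_lt_gaussNorm hr.le hqM hj) (by positivity) (gaussNorm_pos hr hp)
  rw [dominantIndices, gaussNorm_mul hna hr]
  refine ⟨?_, fun k hk => ?_⟩
  · show v ((p * q).coeff (N + M)) * r ^ (N + M) = _
    rw [coeff_mul, hna.apply_sum_eq_of_lt (fun _ => (v.map_neg _).symm) (k := (N, M))
      (mem_antidiagonal.2 rfl), hterm, mem_dominantIndices.1 hpN.1, mem_dominantIndices.1 hqM.1]
    rintro ⟨i, j⟩ hij hne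
    have hij' : i + j = N + M := mem_antidiagonal.1 hij
    have hlt' := hlt i j (by simp only [ne_eq, Prod.mk.injEq] at hne; omega)
    rw [← hterm, hij', ← mem_dominantIndices.1 hpN.1, ← mem_dominantIndices.1 hqM.1,
      ← hterm] at hlt'
    exact lt_of_mul_lt_mul_right hlt' (by positivity)
  · by_contra! hkN
    obtain ⟨x, hx, hle⟩ := hna.finset_image_add_of_nonempty (fun x => p.coeff x.1 * q.coeff x.2)
      ⟨(k, 0), mem_antidiagonal.2 (add_zero k)⟩
    have hx' : x.1 + x.2 = k := mem_antidiagonal.1 hx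
    refine (lt_irrefl (p.gaussNorm v r * q.gaussNorm v r) ?_)
    calc p.gaussNorm v r * q.gaussNorm v r = v ((p * q).coeff k) * r ^ k := hk.symm
      _ ≤ v (p.coeff x.1 * q.coeff x.2) * r ^ k := by
        rw [coeff_mul]; exact mul_le_mul_of_nonneg_right hle (by positivity)
      _ < p.gaussNorm v r * q.gaussNorm v r := by
        rw [← hx', hterm]; exact hlt _ _ (by omega)

lemma isLeast_dominantIndices_derivative (hna : IsNonarchimedean v) (hr : 0 < r) {p : R[X]}
    {N : ℕ} (hN : IsLeast (p.dominantIndices v r) N) (hN1 : 1 ≤ N) (hvN : v (N : R) = 1) :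
    IsLeast ((derivative p).dominantIndices v r) (N - 1) := by
  obtain ⟨n, rfl⟩ : ∃ n, N = n + 1 := ⟨N - 1, by omega⟩
  rw [Nat.add_sub_cancel]
  have hw : ∀ i, v ((derivative p).coeff i) * r ^ i * r
      = v (((i + 1 : ℕ) : R) * p.coeff (i + 1)) * r ^ (i + 1) := by
    intro i; rw [coeff_derivative, pow_succ, ← Nat.cast_succ, ← Nat.cast_comm, mul_assoc]
  have hle : ∀ i, v (((i + 1 : ℕ) : R) * p.coeff (i + 1)) * r ^ (i + 1)
      ≤ v (p.coeff (i + 1)) * r ^ (i + 1) := fun i =>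
    mul_le_mul_of_nonneg_right hna.nmul_le (by positivity)
  have hn : v ((derivative p).coeff n) * r ^ n * r = p.gaussNorm v r := by
    rw [hw, map_mul, hvN, one_mul, mem_dominantIndices.1 hN.1]
  have hnorm : (derivative p).gaussNorm v r = v ((derivative p).coeff n) * r ^ n :=
    gaussNorm_eq_of_forall_le hr.le fun i =>
      le_of_mul_le_mul_right (((hw i).trans_le ((hle i).trans (p.le_gaussNorm v hr.le _))).trans
        hn.ge) hr
  refine ⟨hnorm.symm, fun i hi => Nat.le_of_succ_le_succ (hN.2 ?_)⟩
  have hi' : v (((i + 1 : ℕ) : R) * p.coeff (i + 1)) * r ^ (i + 1) = p.gaussNorm v r := by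
    rw [← hw, mem_dominantIndices.1 hi, hnorm, hn]
  exact le_antisymm (p.le_gaussNorm v hr.le _) (hi' ▸ hle i)

end Ring

lemma derivative_taylor {R : Type*} [CommSemiring R] (a : R) (p : R[X]) :
    derivative (taylor a p) = taylor a (derivative p) := by
  simp [taylor_apply, derivative_comp]

open Finset.HasAntidiagonal in
lemma isLeast_dominantIndices_multiset_prod_X_sub_C {R : Type*} [CommRing R] [Nontrivial R]
    {v : AbsoluteValue R ℝ} (hna : IsNonarchimedean v) {r : ℝ} (hr : 0 < r) (s : Multiset R) :
    IsLeast ((s.map fun z => X - C z).prod.dominantIndices v r)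
      (Multiset.card (s.filter fun z => v z < r)) := by
  induction s using Multiset.induction with
  | empty => simpa using isLeast_dominantIndices_C (v := v) (r := r) (1 : R)
  | cons z s ih =>
    rw [Multiset.map_cons, Multiset.prod_cons, Multiset.filter_cons, Multiset.card_add]
    convert isLeast_dominantIndices_mul hna hr (X_sub_C_ne_zero z)
      (monic_multisetProd_X_sub_C s).ne_zero (isLeast_dominantIndices_X_sub_C hr z) ih using 1
    split_ifs <;> simp

section Field

variable {K : Type*} [Field K] [IsAlgClosed K] {v : AbsoluteValue K ℝ} {r : ℝ}

theorem isLeast_dominantIndices_taylor (hna : IsNonarchimedean v) (hr : 0 < r) (a : K)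
    (p : K[X]) :
    IsLeast ((taylor a p).dominantIndices v r)
      (Multiset.card (p.roots.filter fun z => v (z - a) < r)) := by
  rcases eq_or_ne p 0 with rfl | hp
  · simp [dominantIndices, IsLeast, lowerBounds]
  have hfac :
      taylor a p = C p.leadingCoeff * ((p.roots.map (· - a)).map fun z => X - C z).prod := by
    conv_lhs =>
      rw [← C_leadingCoeff_mul_prod_multiset_X_sub_C (p := p) IsAlgClosed.card_roots_eq_natDegree]
    rw [taylor_apply, mul_comp, C_comp, multiset_prod_comp, Multiset.map_map, Multiset.map_map]
    congr 2
    exact Multiset.map_congr rfl fun z _ => by simp; ring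
  rw [hfac]
  convert isLeast_dominantIndices_mul hna hr (C_ne_zero.2 (leadingCoeff_ne_zero.2 hp))
    (monic_multisetProd_X_sub_C _).ne_zero (isLeast_dominantIndices_C _)
    (isLeast_dominantIndices_multiset_prod_X_sub_C hna hr _) using 1
  rw [Multiset.filter_map, Multiset.card_map, zero_add]
  rfl

theorem card_filter_roots_derivative_add_one (hna : IsNonarchimedean v) (hr : 0 < r) (a : K)
    {p : K[X]} (hN : 1 ≤ Multiset.card (p.roots.filter fun z => v (z - a) < r))
    (hvN : v (Multiset.card (p.roots.filter fun z => v (z - a) < r) : K) = 1) :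
    Multiset.card ((derivative p).roots.filter fun z => v (z - a) < r) + 1
      = Multiset.card (p.roots.filter fun z => v (z - a) < r) := by
  have h := isLeast_dominantIndices_derivative hna hr (isLeast_dominantIndices_taylor hna hr a p)
    hN hvN
  rw [derivative_taylor] at h
  have := h.unique (isLeast_dominantIndices_taylor hna hr a (derivative p))
  omega

end Field

end Polynomial

lemma IsDiskOfRadius.nonempty {K : Type*} [Field K] {v : AbsoluteValue K ℝ} {D : Set K} {r : ℝ}
    (hD : IsDiskOfRadius v D r) : D.Nonempty := by
  obtain ⟨hr, a, rfl | rfl⟩ := hD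
  · exact ⟨a, by simpa using hr⟩
  · exact ⟨a, by simpa using hr.le⟩

open scoped Topology in
lemma IsDiskOfRadius.exists_forall_mem_iff_lt {K : Type*} [Field K] {v : AbsoluteValue K ℝ}
    {D : Set K} {r : ℝ} (hD : IsDiskOfRadius v D r) (s : Multiset K) :
    ∃ a ρ, 0 < ρ ∧ ∀ z ∈ s, z ∈ D ↔ v (z - a) < ρ := by
  obtain ⟨hr, a, rfl | rfl⟩ := hD
  · exact ⟨a, r, hr, fun z _ => Iff.rfl⟩
  have hz : ∀ z, ∀ᶠ ρ in 𝓝[>] r, (v (z - a) ≤ r ↔ v (z - a) < ρ) := by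
    intro z
    by_cases h : v (z - a) ≤ r
    · filter_upwards [self_mem_nhdsWithin] with ρ hρ
      exact iff_of_true h (h.trans_lt hρ)
    · filter_upwards [Ioo_mem_nhdsGT (not_le.1 h)] with ρ hρ
      exact iff_of_false h (not_lt.2 hρ.2.le)
  obtain ⟨ρ, hρ, hs⟩ :=
    (eventually_mem_nhdsWithin.and (s.toFinset.eventually_all.2 fun z _ => hz z)).exists
  exact ⟨a, ρ, hr.trans hρ, fun z hz => hs z (Multiset.mem_toFinset.2 hz)⟩

theorem stmt_9_general {K : Type*} [Field K] [IsAlgClosed K]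
    (v : AbsoluteValue K ℝ) (hna : IsNonarchimedean ⇑v)
    (f : K[X]) (U V : Set K) (r s : ℝ)
    (hU : IsDiskOfRadius v U r) (hV : IsDiskOfRadius v V s)
    (e : ℕ) (he : 1 ≤ e)
    (hres : ∀ n : ℕ, 1 ≤ n → n ≤ e → v (n : K) = 1)
    (hdeg : ∀ y ∈ V, mapDegreeOn f U y = e) :
    e = Multiset.card (Multiset.filter (· ∈ U) ((derivative f).roots)) + 1 := by
  obtain ⟨y, hy⟩ := hV.nonempty
  have hcount : Multiset.card ((f - C y).roots.filter (· ∈ U)) = e := hdeg y hy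
  obtain ⟨a, ρ, hρ, hUρ⟩ :=
    hU.exists_forall_mem_iff_lt ((f - C y).roots + (derivative f).roots)
  rw [Multiset.filter_congr fun z hz => hUρ z (Multiset.mem_add.2 (Or.inl hz))] at hcount
  rw [Multiset.filter_congr fun z hz => hUρ z (Multiset.mem_add.2 (Or.inr hz))]
  have := Polynomial.card_filter_roots_derivative_add_one hna hρ a (p := f - C y)
    (hcount ▸ he) (hcount ▸ hres e he le_rfl)
  rw [derivative_sub, derivative_C, sub_zero, hcount] at this
  exact this.symm

/-- Non-Archimedean Riemann–Hurwitz formula for disks: a polynomial map of degree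
`e ≥ 1` between disks (with `e` less than the residue characteristic if it is positive,
equivalently `|n| = 1` for `1 ≤ n ≤ e`) satisfies `e = C + 1`, where `C` is the number
of critical points in `U` counted with multiplicity. -/
theorem stmt_9 {K : Type*} [Field K] [IsAlgClosed K]
    (v : AbsoluteValue K ℝ) (hna : IsNonarchimedean ⇑v)
    (f : K[X]) (U V : Set K) (r s : ℝ)
    (hU : IsDiskOfRadius v U r) (hV : IsDiskOfRadius v V s)
    (e : ℕ) (he : 1 ≤ e)
    (hres : ∀ n : ℕ, 1 ≤ n → n ≤ e → v (n : K) = 1)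
    (hmaps : Set.MapsTo (fun z => f.eval z) U V)
    (hdeg : ∀ y ∈ V, mapDegreeOn f U y = e) :
    e = Multiset.card (Multiset.filter (· ∈ U) ((derivative f).roots)) + 1 :=
  stmt_9_general v hna f U V r s hU hV e he hres hdeg
end

section
/- Let d ≥ 2 and let β = exp(2πi/(d²−1)). Define F(T) = (T^{d−1}−1)/(T^d (T−1)) + (T^{d(d−1)}−1)/(T^{d²}(T^d−1)). Then for all integers j, k not divisible by d+1, F(β^j) = F(β^k) implies k ≡ j or k ≡ jd (mod d²−1). -/
/-!
Write `β ^ a = S ^ 2` with `S = exp (π a i / (d² - 1))` on the unit circle. A half-angle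
computation gives `F(S²) = S^{-(d+1)} ρ(S)` with `ρ(S) = (p² - 4) / (q - p)` real, where
`p = 2 Re S^{d-1}` and `q = 2 Re S^{d+1}`. If `F(S₁²) = F(S₂²) ≠ 0`, comparing moduli and phases
gives `S₂^{d+1} = ε S₁^{d+1}` and `ρ(S₂) = ε ρ(S₁)` with `ε = ±1`. Since `p ↦ (p² - 4) / (q - p)` is
injective on `(-2, 2)` when `|q| ≤ 2`, this forces `Re S₂^{d-1} = ε Re S₁^{d-1}`, i.e.
`S₂^{d-1} = ε S₁^{±(d-1)}`. Dividing the two relations gives `S₂² = S₁²` or `S₂² = S₁^{2d}`,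
that is `β^k = β^j` or `β^k = β^{jd}`.
-/

/-- The rational function
`F(T) = (T^{d-1}-1)/(T^d (T-1)) + (T^{d(d-1)}-1)/(T^{d²}(T^d-1))`. -/
noncomputable def Ffun (d : ℕ) (T : ℂ) : ℂ :=
  (T ^ (d - 1) - 1) / (T ^ d * (T - 1)) +
    (T ^ (d * (d - 1)) - 1) / (T ^ (d ^ 2) * (T ^ d - 1))

open Complex ComplexConjugate

theorem injOn_sq_sub_sq_div_sub {c C : ℝ} (hC : |C| ≤ c) :
    Set.InjOn (fun a : ℝ => (a ^ 2 - c ^ 2) / (C - a)) (Set.Ioo (-c) c) := by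
  intro a ⟨ha₁, ha₂⟩ b ⟨hb₁, hb₂⟩ hab
  simp only at hab
  have hpos : 0 < c ^ 2 + a * b - C * (a + b) := by
    rcases abs_le.1 hC with ⟨hC₁, hC₂⟩
    rcases le_total 0 (a + b) with h | h
    · nlinarith [mul_pos (sub_pos.2 ha₂) (sub_pos.2 hb₂)]
    · nlinarith [mul_pos (neg_lt_iff_pos_add.1 ha₁) (neg_lt_iff_pos_add.1 hb₁)]
  by_cases hCa : C - a = 0
  · by_contra hne
    rw [hCa, div_zero, eq_comm, div_eq_zero_iff] at hab
    rcases hab with h | h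
    · nlinarith
    · exact hne (by linarith)
  by_cases hCb : C - b = 0
  · rw [hCb, div_zero, div_eq_zero_iff] at hab
    rcases hab with h | h
    · nlinarith
    · exact absurd h hCa
  rw [div_eq_div_iff hCa hCb] at hab
  have : (a - b) * (c ^ 2 + a * b - C * (a + b)) = 0 := by linear_combination -hab
  linarith [(mul_eq_zero.1 this).resolve_right hpos.ne']

theorem eq_or_eq_conj_of_norm_eq_of_re_eq {z w : ℂ} (hn : ‖z‖ = ‖w‖) (hre : z.re = w.re) :
    z = w ∨ z = conj w := by
  have him : z.im ^ 2 = w.im ^ 2 := by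
    have := congrArg (· ^ 2) hn
    simp only [Complex.sq_norm, normSq_apply] at this
    rw [hre] at this
    linear_combination this
  rcases sq_eq_sq_iff_eq_or_eq_neg.1 him with h | h
  · exact Or.inl (Complex.ext hre h)
  · exact Or.inr (Complex.ext hre (by simpa using h))

theorem exists_abs_eq_one_of_mul_ofReal_eq {u v : ℂ} {r s : ℝ} (huv : ‖u‖ = ‖v‖) (hu : u ≠ 0)
    (hr : r ≠ 0) (h : u * r = v * s) : ∃ ε : ℝ, |ε| = 1 ∧ s = ε * r ∧ u = ε * v := by
  have hrs : |r| = |s| := by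
    have := congrArg norm h
    rw [norm_mul, norm_mul, huv, norm_real, norm_real] at this
    exact mul_left_cancel₀ (huv ▸ norm_ne_zero_iff.2 hu) this
  have hr' : (r : ℂ) ≠ 0 := ofReal_ne_zero.2 hr
  rcases abs_eq_abs.1 hrs with rfl | rfl
  · exact ⟨1, abs_one, by ring, by simpa using mul_right_cancel₀ hr' h⟩
  · refine ⟨-1, by norm_num, by ring, mul_right_cancel₀ hr' ?_⟩
    push_cast at h ⊢
    linear_combination h

theorem add_inv_eq_ofReal_two_mul_re {z : ℂ} (hz : ‖z‖ = 1) :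
    z + z⁻¹ = ((2 * z.re : ℝ) : ℂ) := by
  rw [inv_eq_conj hz, add_conj]

theorem abs_two_mul_re_le_two {z : ℂ} (hz : ‖z‖ = 1) : |2 * z.re| ≤ 2 := by
  rw [abs_mul, abs_two]
  linarith [abs_re_le_norm z]

theorem sq_eq_or_sq_eq_sq_pow_of_pow_eq {K : Type*} [Field K] {d : ℕ} (hd : d ≠ 0)
    {S₁ S₂ ε : K} (hε : ε ≠ 0) (hS₁ : S₁ ≠ 0) (hB : S₂ ^ (d + 1) = ε * S₁ ^ (d + 1))
    (hA : S₂ ^ (d - 1) = ε * S₁ ^ (d - 1) ∨ S₂ ^ (d - 1) = ε * (S₁ ^ (d - 1))⁻¹) :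
    S₂ ^ 2 = S₁ ^ 2 ∨ S₂ ^ 2 = (S₁ ^ 2) ^ d := by
  obtain ⟨e, rfl⟩ := Nat.exists_eq_add_one_of_ne_zero hd
  rw [Nat.add_sub_cancel] at hA
  have hSe : S₁ ^ e ≠ 0 := pow_ne_zero _ hS₁
  rcases hA with hA | hA
  · refine Or.inl (mul_left_cancel₀ (mul_ne_zero hε hSe) ?_)
    linear_combination hB - S₂ ^ 2 * hA
  · refine Or.inr (mul_left_cancel₀ (mul_ne_zero hε (inv_ne_zero hSe)) ?_)
    linear_combination hB - S₂ ^ 2 * hA - ε * S₁ ^ (e + 2) * mul_inv_cancel₀ hSe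

theorem pow_ne_one_of_pow_sq_sub_one_eq_one {M : Type*} [Monoid M] {d : ℕ} (hd : d ≠ 0) {T : M}
    (hT : T ^ (d ^ 2 - 1) = 1) (h1 : T ≠ 1) : T ^ d ≠ 1 := fun h => h1 <|
  calc T = T ^ (d ^ 2 - 1 + 1) := by rw [pow_succ, hT, one_mul]
    _ = (T ^ d) ^ d := by
      rw [Nat.sub_add_cancel (Nat.one_le_pow _ _ (Nat.pos_of_ne_zero hd)), sq, pow_mul]
    _ = 1 := by rw [h, one_pow]

theorem IsPrimitiveRoot.zpow_pow_sub_one_ne_one {G : Type*} [DivisionCommMonoid G] {β : G}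
    {d : ℕ} (hd : 2 ≤ d) (hβ : IsPrimitiveRoot β (d ^ 2 - 1)) {a : ℤ} (ha : ¬ (d + 1 : ℤ) ∣ a) :
    (β ^ a) ^ (d - 1) ≠ 1 := by
  have hcast : ((d ^ 2 - 1 : ℕ) : ℤ) = ((d - 1 : ℕ) : ℤ) * (d + 1) := by
    push_cast [Nat.one_le_pow _ _ (by omega : 0 < d), (by omega : 1 ≤ d)]
    ring
  rw [← zpow_natCast, ← zpow_mul, Ne, hβ.zpow_eq_one_iff_dvd, hcast, mul_comm a,
    mul_dvd_mul_iff_left (by omega)]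
  exact ha

theorem IsPrimitiveRoot.intModEq_of_zpow_eq {K : Type*} [Field K] {ζ : K} {n : ℕ} (hn : n ≠ 0)
    (hζ : IsPrimitiveRoot ζ n) {a b : ℤ} (hab : ζ ^ a = ζ ^ b) : a ≡ b [ZMOD n] := by
  rw [Int.modEq_iff_dvd, ← hζ.zpow_eq_one_iff_dvd, zpow_sub₀ (hζ.ne_zero hn), hab,
    div_self (zpow_ne_zero _ (hζ.ne_zero hn))]

theorem Ffun_eq_of_pow_eq_one {d : ℕ} {T : ℂ} (hT : T ^ (d ^ 2 - 1) = 1) (hT0 : T ≠ 0)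
    (h1 : T ≠ 1) (hd1 : T ^ d ≠ 1) :
    Ffun d T = (T ^ (d - 1) - 1) ^ 2 / (T ^ (d - 1) * (T - 1) * (T ^ d - 1)) := by
  cases d with
  | zero => simp [Ffun]
  | succ e =>
    have hexp : (e + 1) ^ 2 = (e + 1) * e + e + 1 := by ring
    rw [hexp, Nat.add_sub_cancel] at hT
    have hsq : T ^ ((e + 1) ^ 2) = T := by rw [hexp, pow_succ, hT, one_mul]
    have hinv : T ^ ((e + 1) * e) = (T ^ e)⁻¹ :=
      eq_inv_of_mul_eq_one_left (by rw [← pow_add, hT])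
    rw [Ffun, hsq, Nat.add_sub_cancel, hinv]
    have h1' : T - 1 ≠ 0 := sub_ne_zero.2 h1
    have hd1' : T ^ (e + 1) - 1 ≠ 0 := sub_ne_zero.2 hd1
    field_simp
    ring

theorem sq_sub_one_sq_div_eq_half_angle (d : ℕ) {S : ℂ} (hS : S ≠ 0) :
    ((S ^ 2) ^ (d - 1) - 1) ^ 2 / ((S ^ 2) ^ (d - 1) * (S ^ 2 - 1) * ((S ^ 2) ^ d - 1)) =
      (S ^ (d + 1))⁻¹ * (((S ^ (d - 1) + (S ^ (d - 1))⁻¹) ^ 2 - 4) /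
        (S ^ (d + 1) + (S ^ (d + 1))⁻¹ - (S ^ (d - 1) + (S ^ (d - 1))⁻¹))) := by
  cases d with
  | zero => norm_num
  | succ e =>
    simp only [Nat.add_sub_cancel]
    have hnum : ((S ^ 2) ^ e - 1) ^ 2 = S ^ (2 * e) * ((S ^ e + (S ^ e)⁻¹) ^ 2 - 4) := by
      field_simp
      ring
    have hden : (S ^ 2) ^ e * (S ^ 2 - 1) * ((S ^ 2) ^ (e + 1) - 1) =
        S ^ (2 * e) * (S ^ (e + 2) *
          (S ^ (e + 2) + (S ^ (e + 2))⁻¹ - (S ^ e + (S ^ e)⁻¹))) := by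
      field_simp
      ring
    rw [hnum, hden, mul_div_mul_left _ _ (pow_ne_zero _ hS), div_mul_eq_div_div_swap,
      div_eq_inv_mul]

/-- For `S = exp (x * I)` this is `sin ((d - 1) x) ^ 2 / (sin x * sin (d x))`, written through
`2 cos (m x) = 2 * (S ^ m).re`. -/
noncomputable def realFactor (d : ℕ) (S : ℂ) : ℝ :=
  ((2 * (S ^ (d - 1)).re) ^ 2 - 4) / (2 * (S ^ (d + 1)).re - 2 * (S ^ (d - 1)).re)

theorem abs_two_mul_re_pow_lt_two {d : ℕ} {S : ℂ} (hS : ‖S‖ = 1) (hr : realFactor d S ≠ 0) :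
    |2 * (S ^ (d - 1)).re| < 2 := by
  refine (abs_two_mul_re_le_two (by rw [norm_pow, hS, one_pow])).lt_of_ne fun h => hr ?_
  rw [realFactor, ← sq_abs, h]
  norm_num

theorem exists_sign_of_realFactor_eq {d : ℕ} {S₁ S₂ : ℂ} (h₁ : ‖S₁‖ = 1) (h₂ : ‖S₂‖ = 1)
    (hr : realFactor d S₁ ≠ 0)
    (h : (S₁ ^ (d + 1))⁻¹ * realFactor d S₁ = (S₂ ^ (d + 1))⁻¹ * realFactor d S₂) :
    ∃ ε : ℝ, |ε| = 1 ∧ S₂ ^ (d + 1) = ε * S₁ ^ (d + 1) ∧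
      (S₂ ^ (d - 1)).re = ε * (S₁ ^ (d - 1)).re := by
  have hS₁ : S₁ ≠ 0 := norm_ne_zero_iff.1 (by rw [h₁]; exact one_ne_zero)
  obtain ⟨ε, hε₁, hρ, hu⟩ := exists_abs_eq_one_of_mul_ofReal_eq (by simp [h₁, h₂])
    (inv_ne_zero (pow_ne_zero _ hS₁)) hr h
  have hε : ε ^ 2 = 1 := by rw [← sq_abs, hε₁, one_pow]
  have hε' : ε⁻¹ = ε := inv_eq_of_mul_eq_one_right (by rw [← sq, hε])
  have hB : S₂ ^ (d + 1) = ε * S₁ ^ (d + 1) := by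
    have hinv := congrArg Inv.inv hu
    rw [inv_inv, mul_inv, ← ofReal_inv, hε', inv_inv] at hinv
    have hεC : (ε : ℂ) ^ 2 = 1 := by exact_mod_cast hε
    linear_combination (-ε : ℂ) * hinv - S₂ ^ (d + 1) * hεC
  refine ⟨ε, hε₁, hB, ?_⟩
  have hC : (S₂ ^ (d + 1)).re = ε * (S₁ ^ (d + 1)).re := by rw [hB, re_ofReal_mul]
  have hρ₂ : realFactor d S₂ ≠ 0 := by
    rw [hρ]; exact mul_ne_zero (by rintro rfl; norm_num at hε) hr
  have hinj := injOn_sq_sub_sq_div_sub (abs_two_mul_re_le_two (z := S₂ ^ (d + 1))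
    (by rw [norm_pow, h₂, one_pow]))
    (abs_lt.1 (abs_two_mul_re_pow_lt_two h₂ hρ₂))
    (x₂ := 2 * (ε * (S₁ ^ (d - 1)).re)) ?_ ?_
  · linarith
  · rw [mul_left_comm]
    exact abs_lt.1 (by rw [abs_mul, hε₁, one_mul]; exact abs_two_mul_re_pow_lt_two h₁ hr)
  · norm_num only
    change realFactor d S₂ = _
    rw [hρ, realFactor, hC, show (2 * (ε * (S₁ ^ (d - 1)).re)) ^ 2 - 4 =
        (2 * (S₁ ^ (d - 1)).re) ^ 2 - 4 by linear_combination (4 * (S₁ ^ (d - 1)).re ^ 2) * hε,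
      div_eq_mul_inv, div_eq_mul_inv, ← mul_sub, ← mul_sub, ← mul_sub]
    simp only [mul_inv, hε']
    ring

theorem sq_eq_or_sq_eq_sq_pow_of_realFactor_eq {d : ℕ} {S₁ S₂ : ℂ} (h₁ : ‖S₁‖ = 1)
    (h₂ : ‖S₂‖ = 1) (hr : realFactor d S₁ ≠ 0)
    (h : (S₁ ^ (d + 1))⁻¹ * realFactor d S₁ = (S₂ ^ (d + 1))⁻¹ * realFactor d S₂) :
    S₂ ^ 2 = S₁ ^ 2 ∨ S₂ ^ 2 = (S₁ ^ 2) ^ d := by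
  have hd : d ≠ 0 := by rintro rfl; norm_num [realFactor] at hr
  have hS₁ : S₁ ≠ 0 := norm_ne_zero_iff.1 (by rw [h₁]; exact one_ne_zero)
  obtain ⟨ε, hε₁, hB, hA⟩ := exists_sign_of_realFactor_eq h₁ h₂ hr h
  have hε : (ε : ℂ) ≠ 0 := ofReal_ne_zero.2 (by rintro rfl; norm_num at hε₁)
  refine sq_eq_or_sq_eq_sq_pow_of_pow_eq hd hε hS₁ hB ?_
  rw [← re_ofReal_mul] at hA
  refine (eq_or_eq_conj_of_norm_eq_of_re_eq ?_ hA).imp_right fun h => ?_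
  · simp [hε₁, h₁, h₂]
  · rw [h, map_mul, conj_ofReal, ← inv_eq_conj (by rw [norm_pow, h₁, one_pow])]

theorem Ffun_sq_eq_and_realFactor_ne_zero {d : ℕ} {S : ℂ} (hS : ‖S‖ = 1)
    (hT : (S ^ 2) ^ (d ^ 2 - 1) = 1) (hT1 : (S ^ 2) ^ (d - 1) ≠ 1) :
    Ffun d (S ^ 2) = (S ^ (d + 1))⁻¹ * realFactor d S ∧ realFactor d S ≠ 0 := by
  have hS0 : S ≠ 0 := norm_ne_zero_iff.1 (by rw [hS]; exact one_ne_zero)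
  have hd : d ≠ 0 := by rintro rfl; exact hT1 (pow_zero _)
  have h1 : S ^ 2 ≠ 1 := fun h => hT1 (by rw [h, one_pow])
  have hd1 := pow_ne_one_of_pow_sq_sub_one_eq_one hd hT h1
  have hF := Ffun_eq_of_pow_eq_one hT (pow_ne_zero 2 hS0) h1 hd1
  have hF0 : Ffun d (S ^ 2) ≠ 0 := by
    rw [hF]
    exact div_ne_zero (pow_ne_zero _ (sub_ne_zero.2 hT1)) (mul_ne_zero (mul_ne_zero
      (pow_ne_zero _ (pow_ne_zero _ hS0)) (sub_ne_zero.2 h1)) (sub_ne_zero.2 hd1))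
  have heq : Ffun d (S ^ 2) = (S ^ (d + 1))⁻¹ * realFactor d S := by
    rw [hF, sq_sub_one_sq_div_eq_half_angle d hS0,
      add_inv_eq_ofReal_two_mul_re (by rw [norm_pow, hS, one_pow]),
      add_inv_eq_ofReal_two_mul_re (by rw [norm_pow, hS, one_pow]), realFactor]
    push_cast
    ring
  exact ⟨heq, fun h0 => hF0 (by rw [heq, h0, ofReal_zero, mul_zero])⟩

/-- With `β = exp(2πi/(d²−1))`, for integers `j, k` not divisible by `d + 1`,
`F(β^j) = F(β^k)` implies `k ≡ j` or `k ≡ jd (mod d²−1)`. -/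
theorem stmt_15 (d : ℕ) (hd : 2 ≤ d)
    (β : ℂ) (hβ : β = Complex.exp (2 * Real.pi * Complex.I / ((d : ℂ) ^ 2 - 1)))
    (j k : ℤ) (hj : ¬ ((d : ℤ) + 1 ∣ j)) (hk : ¬ ((d : ℤ) + 1 ∣ k))
    (hF : Ffun d (β ^ j) = Ffun d (β ^ k)) :
    k ≡ j [ZMOD ((d : ℤ) ^ 2 - 1)] ∨ k ≡ j * (d : ℤ) [ZMOD ((d : ℤ) ^ 2 - 1)] := by
  set n := d ^ 2 - 1 with hn_def
  have hn : n ≠ 0 := by have := Nat.pow_le_pow_left hd 2; omega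
  have hnZ : (n : ℤ) = (d : ℤ) ^ 2 - 1 := by
    rw [hn_def, Nat.cast_sub (Nat.one_le_pow _ _ (by omega)), Nat.cast_pow, Nat.cast_one]
  have hnC : (n : ℂ) = (d : ℂ) ^ 2 - 1 := by exact_mod_cast hnZ
  have hβ' : IsPrimitiveRoot β n := by
    rw [hβ, ← hnC]
    exact isPrimitiveRoot_exp n hn
  set γ : ℂ := exp ((Real.pi / n : ℝ) * I)
  have hγβ : ∀ a : ℤ, (γ ^ a) ^ 2 = β ^ a := fun a => by
    rw [← zpow_natCast, ← zpow_mul, mul_comm, zpow_mul, zpow_natCast, ← exp_nat_mul, hβ, ← hnC]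
    push_cast
    ring_nf
  have hγ : ∀ a : ℤ, ‖γ ^ a‖ = 1 := fun a => by rw [norm_zpow, norm_exp_ofReal_mul_I, one_zpow]
  have hT : ∀ a : ℤ, ((γ ^ a) ^ 2) ^ n = 1 := fun a => by
    rw [hγβ, ← zpow_natCast, ← zpow_mul, mul_comm, zpow_mul, zpow_natCast, hβ'.pow_eq_one,
      one_zpow]
  have hFγ : ∀ a : ℤ, ¬ (d + 1 : ℤ) ∣ a → Ffun d ((γ ^ a) ^ 2) =
      ((γ ^ a) ^ (d + 1))⁻¹ * realFactor d (γ ^ a) ∧ realFactor d (γ ^ a) ≠ 0 := fun a ha =>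
    Ffun_sq_eq_and_realFactor_ne_zero (hγ a) (hT a) (hγβ a ▸ hβ'.zpow_pow_sub_one_ne_one hd ha)
  rw [← hγβ, ← hγβ, (hFγ j hj).1, (hFγ k hk).1] at hF
  rw [← hnZ]
  rcases sq_eq_or_sq_eq_sq_pow_of_realFactor_eq (hγ j) (hγ k) (hFγ j hj).2 hF with h | h
  · rw [hγβ, hγβ] at h
    exact Or.inl (hβ'.intModEq_of_zpow_eq hn h)
  · rw [hγβ, hγβ, ← zpow_natCast, ← zpow_mul] at h
    exact Or.inr (hβ'.intModEq_of_zpow_eq hn h)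
end
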